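/- There exists a finite constant C such that for all integers L ≥ 1, all ε ∈ (0, 1/2), and all α ∈ ℝ: | (2L+1)^{−3} Σ_{k ∈ Λ_L*} ((e_Δ(k) − α)² + ε²)^{−1/2} − ∫_{[0,1]³} ((e_Δ(k) − α)² + ε²)^{−1/2} dk | ≤ C / (ε² L), where Λ_L* = {j/L : j ∈ ℤ, −L ≤ j ≤ L}³. -/

import Mathlib

open MeasureTheory Real

noncomputable section

/-- The unit cell `[0,1]³` of the torus `𝕋³ = ℝ³/ℤ³`. -/
def cell : Set (Fin 3 → ℝ) := Set.Icc 0 1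

/-- The lattice kinetic energy `e_Δ(k) = Σᵢ (1 − cos(2π kᵢ))`. -/
def eD (k : Fin 3 → ℝ) : ℝ := ∑ i, (1 - Real.cos (2 * π * k i))

/-- The point `k = j/L ∈ Λ_L* = (1/L){−L,…,L}³` indexed by `a ∈ (ℤ/(2L+1)ℤ)³`, using the
representatives `valMinAbs (a i) ∈ {−L,…,L}`. -/
def dualPt (L : ℕ) (a : Fin 3 → ZMod (2*L+1)) : Fin 3 → ℝ :=
  fun i => ((a i).valMinAbs : ℝ) / L
open Set

/-!
Match the sample points `j/L`, `j ∈ {-L,…,L}³`, with the `(2L+1)³` cubes of side `2/(2L+1)`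
tiling `[-1,1]³`: every point of the cube indexed by `j` lies within sup-distance `1/L` of `j/L`.
The integrand is `6π/ε²`-Lipschitz, because `t ↦ |t - α - iε|⁻¹` is `ε⁻²`-Lipschitz and `e_Δ` is
`6π`-Lipschitz, so the normalized Riemann sum is within `8 · 6π/(ε² L)` of `∫_{[-1,1]³}`.
Finally `∫_{[-1,1]³} = 8 ∫_{[0,1]³}` by `ℤ³`-periodicity.
-/

theorem abs_inv_norm_sub_inv_norm_le {E : Type*} [SeminormedAddCommGroup E] {z w : E} {ε : ℝ}
    (hε : 0 < ε) (hz : ε ≤ ‖z‖) (hw : ε ≤ ‖w‖) : |‖z‖⁻¹ - ‖w‖⁻¹| ≤ ‖z - w‖ / ε ^ 2 := by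
  have hz0 : ‖z‖ ≠ 0 := (hε.trans_le hz).ne'
  have hw0 : ‖w‖ ≠ 0 := (hε.trans_le hw).ne'
  rw [inv_sub_inv hz0 hw0, abs_div, abs_mul, abs_norm, abs_norm, norm_sub_rev, sq]
  exact div_le_div₀ (norm_nonneg _) (abs_norm_sub_norm_le w z) (by positivity)
    (mul_le_mul hz hw hε.le (norm_nonneg _))

theorem abs_inv_sqrt_sq_add_sq_sub_le {ε : ℝ} (hε : 0 < ε) (s t : ℝ) :
    |(√(s ^ 2 + ε ^ 2))⁻¹ - (√(t ^ 2 + ε ^ 2))⁻¹| ≤ |s - t| / ε ^ 2 := by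
  have hε_le (u : ℝ) : ε ≤ ‖(u : ℂ) + ε * Complex.I‖ := by
    simpa [abs_of_pos hε] using Complex.abs_im_le_norm ((u : ℂ) + ε * Complex.I)
  simpa [Complex.norm_add_mul_I, ← Complex.ofReal_sub] using
    abs_inv_norm_sub_inv_norm_le hε (hε_le s) (hε_le t)

theorem abs_setIntegral_sub_measureReal_mul_le {α : Type*} [MeasurableSpace α] {μ : Measure α}
    {s : Set α} {f : α → ℝ} {y D : ℝ} (hs : μ s < ⊤) (hf : IntegrableOn f s μ)
    (h : ∀ x ∈ s, |f x - y| ≤ D) : |∫ x in s, f x ∂μ - μ.real s * y| ≤ μ.real s * D := by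
  rw [← smul_eq_mul, ← setIntegral_const, ← integral_sub hf (integrableOn_const hs.ne),
    mul_comm, ← Real.norm_eq_abs]
  exact norm_setIntegral_le_of_norm_le_const hs h

section Grid

variable {ι : Type*}

def gridCube (c h : ℝ) (j : ι → ℤ) : Set (ι → ℝ) :=
  Icc (fun i => c + h * j i) (fun i => c + h * (j i + 1))

theorem volume_Icc_inter_Icc_eq_zero [Fintype ι] {a b a' b' : ι → ℝ} (i : ι) (h : b i ≤ a' i) :
    volume (Icc a b ∩ Icc a' b') = 0 := by
  rw [Icc_inter_Icc, Real.volume_Icc_pi]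
  refine Finset.prod_eq_zero (Finset.mem_univ i) (ENNReal.ofReal_eq_zero.2 ?_)
  simp only [Pi.inf_apply, Pi.sup_apply, sub_nonpos]
  exact (min_le_left _ _).trans (h.trans (le_max_right _ _))

theorem pairwise_aedisjoint_gridCube [Fintype ι] (c : ℝ) {h : ℝ} (hh : 0 ≤ h) :
    Pairwise (Function.onFun (AEDisjoint volume) (gridCube (ι := ι) c h)) := by
  have disjoint_of_lt : ∀ j j' : ι → ℤ, ∀ i, j i < j' i →
      AEDisjoint volume (gridCube c h j) (gridCube c h j') :=
    fun j j' i hlt => volume_Icc_inter_Icc_eq_zero i <| by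
      have : (j i : ℝ) + 1 ≤ j' i := by exact_mod_cast hlt
      nlinarith
  intro j j' hne
  obtain ⟨i, hi⟩ := Function.ne_iff.1 hne
  rcases hi.lt_or_gt with hlt | hlt
  · exact disjoint_of_lt j j' i hlt
  · exact (disjoint_of_lt j' j i hlt).symm

theorem measureReal_gridCube [Fintype ι] (c : ℝ) {h : ℝ} (hh : 0 ≤ h) (j : ι → ℤ) :
    volume.real (gridCube c h j) = h ^ Fintype.card ι := by
  rw [gridCube, measureReal_def, Real.volume_Icc_pi_toReal fun i => by nlinarith]
  simp [← mul_sub]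

theorem exists_int_mem_Icc_of_mem_Icc {c h x : ℝ} {n : ℕ} (hh : 0 < h) (hn : 0 < n)
    (hx : x ∈ Icc c (c + n * h)) :
    ∃ m : ℤ, m ∈ Ico 0 (n : ℤ) ∧ x ∈ Icc (c + h * m) (c + h * (m + 1)) := by
  have hq : 0 ≤ (x - c) / h := div_nonneg (by linarith [hx.1]) hh.le
  refine ⟨min (n - 1) ⌊(x - c) / h⌋, ⟨le_min (by omega) (Int.floor_nonneg.2 hq), by omega⟩,
    ?_, ?_⟩
  · have : ((min (n - 1) ⌊(x - c) / h⌋ : ℤ) : ℝ) ≤ (x - c) / h :=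
      (Int.cast_le.2 (min_le_right _ _)).trans (Int.floor_le _)
    rw [le_div_iff₀ hh] at this
    linarith
  · rcases min_cases ((n : ℤ) - 1) ⌊(x - c) / h⌋ with ⟨hm, -⟩ | ⟨hm, -⟩ <;> rw [hm]
    · push_cast; linarith [hx.2]
    · have := Int.lt_floor_add_one ((x - c) / h)
      rw [div_lt_iff₀ hh] at this
      linarith

variable {T : Type*} {d : T → ℤ} {n : ℕ}

theorem iUnion_gridCube_comp (c : ℝ) {h : ℝ} (hh : 0 < h) (hn : 0 < n)
    (hd : range d = Ico 0 (n : ℤ)) :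
    ⋃ t : ι → T, gridCube c h (d ∘ t) = Icc (fun _ => c) (fun _ => c + n * h) := by
  have hd_bounds : ∀ t, 0 ≤ d t ∧ d t + 1 ≤ n := fun t => by
    have := hd ▸ mem_range_self (f := d) t
    exact ⟨this.1, this.2⟩
  ext x
  simp only [mem_iUnion, gridCube, mem_Icc, Pi.le_def, Function.comp_apply]
  constructor
  · rintro ⟨t, hlo, hhi⟩
    refine ⟨fun i => ?_, fun i => ?_⟩
    · have : (0 : ℝ) ≤ d (t i) := by exact_mod_cast (hd_bounds (t i)).1
      nlinarith [hlo i]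
    · have : ((d (t i) : ℝ) + 1) ≤ n := by exact_mod_cast (hd_bounds (t i)).2
      nlinarith [hhi i]
  · rintro ⟨hlo, hhi⟩
    have hm : ∀ i, ∃ t, x i ∈ Icc (c + h * d t) (c + h * (d t + 1)) := fun i => by
      obtain ⟨m, hm, hxm⟩ := exists_int_mem_Icc_of_mem_Icc hh hn ⟨hlo i, hhi i⟩
      obtain ⟨t, rfl⟩ := hd ▸ hm
      exact ⟨t, hxm⟩
    choose t ht using hm
    exact ⟨t, fun i => (ht i).1, fun i => (ht i).2⟩

theorem integral_Icc_eq_sum_integral_gridCube [Fintype ι] [DecidableEq ι] [Fintype T]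
    (c : ℝ) {h : ℝ} (hh : 0 < h) (hn : 0 < n)
    (hd_inj : Function.Injective d) (hd : range d = Ico 0 (n : ℤ)) {f : (ι → ℝ) → ℝ}
    (hf : IntegrableOn f (Icc (fun _ => c) (fun _ => c + n * h))) :
    ∫ x in Icc (fun _ => c) (fun _ => c + n * h), f x
      = ∑ t : ι → T, ∫ x in gridCube c h (d ∘ t), f x := by
  rw [← iUnion_gridCube_comp c hh hn hd] at hf ⊢
  rw [integral_iUnion_ae (s := fun t => gridCube c h (d ∘ t))
    (fun _ => measurableSet_Icc.nullMeasurableSet) _ hf, tsum_fintype]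
  exact fun t t' hne => pairwise_aedisjoint_gridCube c hh.le
    fun heq => hne (funext fun i => hd_inj (congrFun heq i))

theorem setIntegral_Icc_add [Fintype ι] (g : (ι → ℝ) → ℝ) (a b v : ι → ℝ) :
    ∫ x in Icc (a + v) (b + v), g x = ∫ x in Icc a b, g (x + v) := by
  rw [← image_add_const_Icc]
  exact (measurePreserving_add_right volume v).setIntegral_image_emb
    (MeasurableEquiv.addRight v).measurableEmbedding g _

theorem range_finVal_intCast (n : ℕ) : range (fun t : Fin n => (t : ℤ)) = Ico 0 (n : ℤ) := by
  ext m
  simp only [mem_range, mem_Ico]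
  constructor
  · rintro ⟨t, rfl⟩
    exact ⟨by positivity, by exact_mod_cast t.isLt⟩
  · rintro ⟨h0, hn⟩
    exact ⟨⟨m.toNat, by omega⟩, by simp [h0]⟩

theorem integral_Icc_eq_pow_mul_of_periodic [Fintype ι] [DecidableEq ι] {g : (ι → ℝ) → ℝ}
    (hg : ∀ x (m : ι → ℤ), g (x + fun i => (m i : ℝ)) = g x) (c : ℤ) (hn : 0 < n)
    (hint : IntegrableOn g (Icc (fun _ => (c : ℝ)) (fun _ => c + n))) :
    ∫ x in Icc (fun _ => (c : ℝ)) (fun _ => c + n), g x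
      = n ^ Fintype.card ι * ∫ x in Icc 0 1, g x := by
  have hsplit := integral_Icc_eq_sum_integral_gridCube (c : ℝ) one_pos hn
    (fun _ _ h => Fin.ext (by exact_mod_cast h)) (range_finVal_intCast n) (by simpa using hint)
  simp only [mul_one] at hsplit
  have hcube (t : ι → Fin n) : ∫ x in gridCube c 1 ((fun t : Fin n => (t : ℤ)) ∘ t), g x
      = ∫ x in Icc 0 1, g x := by
    have : gridCube (c : ℝ) 1 ((fun t : Fin n => (t : ℤ)) ∘ t)
        = Icc (0 + fun i => ((c + t i : ℤ) : ℝ)) (1 + fun i => ((c + t i : ℤ) : ℝ)) := by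
      simp only [gridCube]
      congr 1 <;> ext i <;> simp [add_assoc, add_comm]
    rw [this, setIntegral_Icc_add]
    exact setIntegral_congr_fun measurableSet_Icc fun x _ => hg x _
  simp [hsplit, hcube]

end Grid

theorem abs_eD_sub_eD_le (x y : Fin 3 → ℝ) : |eD x - eD y| ≤ 6 * π * dist x y := by
  calc |eD x - eD y| = |∑ i, (cos (2 * π * y i) - cos (2 * π * x i))| := by
        simp only [eD, ← Finset.sum_sub_distrib, sub_sub_sub_cancel_left]
    _ ≤ ∑ i, |2 * π * y i - 2 * π * x i| :=
        (Finset.abs_sum_le_sum_abs _ _).trans (Finset.sum_le_sum fun i _ => abs_cos_sub_cos_le _ _)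
    _ ≤ ∑ _i : Fin 3, 2 * π * dist x y := by
        refine Finset.sum_le_sum fun i _ => ?_
        rw [← mul_sub, abs_mul, abs_of_pos two_pi_pos, abs_sub_comm, ← Real.dist_eq]
        exact mul_le_mul_of_nonneg_left (dist_le_pi_dist x y i) two_pi_pos.le
    _ = 6 * π * dist x y := by
        rw [Finset.sum_const, Finset.card_univ, Fintype.card_fin, nsmul_eq_mul]; ring

theorem eD_add_intCast (x : Fin 3 → ℝ) (m : Fin 3 → ℤ) :
    eD (x + fun i => (m i : ℝ)) = eD x := by
  refine Finset.sum_congr rfl fun i _ => ?_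
  rw [Pi.add_apply, mul_add, mul_comm (2 * π) (m i : ℝ), cos_add_int_mul_two_pi]

theorem valMinAbs_mem_Icc (L : ℕ) (z : ZMod (2 * L + 1)) :
    z.valMinAbs ∈ Icc (-(L : ℤ)) L := by
  obtain ⟨h1, h2⟩ := z.valMinAbs_mem_Ioc
  push_cast at h1 h2
  exact ⟨by omega, by omega⟩

theorem range_valMinAbs_add (L : ℕ) :
    range (fun z : ZMod (2 * L + 1) => z.valMinAbs + L) = Ico 0 ((2 * L + 1 : ℕ) : ℤ) := by
  ext m
  simp only [mem_range, mem_Ico]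
  constructor
  · rintro ⟨z, rfl⟩
    obtain ⟨h1, h2⟩ := valMinAbs_mem_Icc L z
    exact ⟨by omega, by push_cast; omega⟩
  · rintro ⟨h0, hm⟩
    refine ⟨((m - L : ℤ) : ZMod (2 * L + 1)), ?_⟩
    rw [(ZMod.valMinAbs_spec _ (m - L)).2 ⟨rfl, by push_cast at hm ⊢; constructor <;> omega⟩]
    ring

theorem injective_valMinAbs_add (L : ℕ) :
    Function.Injective (fun z : ZMod (2 * L + 1) => z.valMinAbs + L) :=
  fun _ _ h => ZMod.injective_valMinAbs (add_right_cancel h)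

theorem abs_sub_div_le_of_mem_Icc {L : ℝ} (hL : 0 < L) {v t : ℝ} (hv : v ∈ Icc (-L) L)
    (ht : t ∈ Icc (-1 + 2 / (2 * L + 1) * (v + L)) (-1 + 2 / (2 * L + 1) * (v + L + 1))) :
    |t - v / L| ≤ 1 / L := by
  have hN : 0 < 2 * L + 1 := by linarith
  obtain ⟨hlo, hhi⟩ := ht
  have hlo_eq : -1 + 2 / (2 * L + 1) * (v + L) = (2 * v - 1) / (2 * L + 1) := by field_simp; ring
  have hhi_eq : -1 + 2 / (2 * L + 1) * (v + L + 1) = (2 * v + 1) / (2 * L + 1) := by field_simp; ring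
  rw [hlo_eq, div_le_iff₀' hN] at hlo
  rw [hhi_eq, le_div_iff₀' hN] at hhi
  have hdiff : t - v / L = (L * t - v) / L := by field_simp
  rw [hdiff, abs_div, abs_of_pos hL, div_le_div_iff_of_pos_right hL, abs_le]
  constructor <;> nlinarith [hv.1, hv.2]

theorem dist_dualPt_le {L : ℕ} (hL : 0 < L) {a : Fin 3 → ZMod (2 * L + 1)} {x : Fin 3 → ℝ}
    (hx : x ∈ gridCube (-1) (2 / (2 * L + 1)) ((fun z => z.valMinAbs + L) ∘ a)) :
    dist x (dualPt L a) ≤ 1 / L := by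
  refine (dist_pi_le_iff (by positivity)).2 fun i => ?_
  have hv := valMinAbs_mem_Icc L (a i)
  rw [Real.dist_eq]
  refine abs_sub_div_le_of_mem_Icc (by exact_mod_cast hL) ⟨?_, ?_⟩ ⟨?_, ?_⟩
  · exact_mod_cast hv.1
  · exact_mod_cast hv.2
  · simpa using hx.1 i
  · simpa [add_assoc] using hx.2 i

theorem abs_riemannSum_dualPt_sub_integral_le {f : (Fin 3 → ℝ) → ℝ} {K : NNReal}
    (hf : LipschitzWith K f) {L : ℕ} (hL : 0 < L) :
    |(2 / (2 * L + 1)) ^ 3 * ∑ a : Fin 3 → ZMod (2 * L + 1), f (dualPt L a)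
      - ∫ x in Icc (fun _ => -1) (fun _ => 1), f x| ≤ 8 * (K : ℝ) / L := by
  set h : ℝ := 2 / (2 * L + 1) with h_def
  have hh : 0 < h := by positivity
  have hbox : Icc (fun _ : Fin 3 => (-1 : ℝ)) (fun _ => 1)
      = Icc (fun _ => -1) (fun _ => -1 + ((2 * L + 1 : ℕ) : ℝ) * h) := by
    congr; ext; push_cast; rw [h_def]; field_simp; ring
  have hsplit := integral_Icc_eq_sum_integral_gridCube (-1) hh (by omega)
    (injective_valMinAbs_add L) (range_valMinAbs_add L)
    (hf.continuous.continuousOn.integrableOn_compact isCompact_Icc)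
  have hterm (a : Fin 3 → ZMod (2 * L + 1)) :
      |h ^ 3 * f (dualPt L a)
        - ∫ x in gridCube (-1) h ((fun z => z.valMinAbs + L) ∘ a), f x| ≤ h ^ 3 * (K / L) := by
    have hvol : volume.real (gridCube (-1) h ((fun z => z.valMinAbs + L) ∘ a)) = h ^ 3 :=
      measureReal_gridCube (-1) hh.le _
    rw [abs_sub_comm, ← hvol]
    refine abs_setIntegral_sub_measureReal_mul_le measure_Icc_lt_top
      (hf.continuous.continuousOn.integrableOn_compact isCompact_Icc) fun x hx => ?_
    calc |f x - f (dualPt L a)| = dist (f x) (f (dualPt L a)) := (Real.dist_eq _ _).symm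
      _ ≤ K * dist x (dualPt L a) := hf.dist_le_mul _ _
      _ ≤ K * (1 / L) := by gcongr; exact dist_dualPt_le hL hx
      _ = K / L := by ring
  calc _ = |∑ a : Fin 3 → ZMod (2 * L + 1), (h ^ 3 * f (dualPt L a)
          - ∫ x in gridCube (-1) h ((fun z => z.valMinAbs + L) ∘ a), f x)| := by
        rw [hbox, hsplit, Finset.sum_sub_distrib, Finset.mul_sum]
    _ ≤ ∑ _a : Fin 3 → ZMod (2 * L + 1), h ^ 3 * (K / L) :=
        (Finset.abs_sum_le_sum_abs _ _).trans (Finset.sum_le_sum fun a _ => hterm a)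
    _ = 8 * (K : ℝ) / L := by
        simp only [Finset.sum_const, Finset.card_univ, Fintype.card_fun, ZMod.card,
          Fintype.card_fin, nsmul_eq_mul, h_def]
        field_simp
        push_cast
        ring

/-- There is a finite constant `C` such that for all integers `L ≥ 1`, all `ε ∈ (0,1/2)` and
all `α ∈ ℝ`, the Riemann sum of `((e_Δ(k)−α)²+ε²)^{−1/2}` over `Λ_L* = (1/L){−L,…,L}³`
(normalized by `(2L+1)^{−3}`) differs from `∫_{[0,1]³} ((e_Δ(k)−α)²+ε²)^{−1/2} dk` by at
most `C/(ε² L)`. -/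
theorem statement15 :
    ∃ C : ℝ, ∀ L : ℕ, 1 ≤ L → ∀ ε : ℝ, 0 < ε → ε < 1/2 → ∀ α : ℝ,
      |((2*(L:ℝ)+1)^3)⁻¹ *
          (∑ a : Fin 3 → ZMod (2*L+1), (Real.sqrt ((eD (dualPt L a) - α)^2 + ε^2))⁻¹)
        - ∫ k in cell, (Real.sqrt ((eD k - α)^2 + ε^2))⁻¹| ≤ C / (ε^2 * L) := by
  refine ⟨6 * π, fun L hL ε hε _ α => ?_⟩
  set f : (Fin 3 → ℝ) → ℝ := fun k => (√((eD k - α) ^ 2 + ε ^ 2))⁻¹ with hf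
  have hLip : LipschitzWith (Real.toNNReal (6 * π / ε ^ 2)) f :=
    LipschitzWith.of_dist_le' fun x y => by
      calc dist (f x) (f y) ≤ |(eD x - α) - (eD y - α)| / ε ^ 2 :=
            abs_inv_sqrt_sq_add_sq_sub_le hε _ _
        _ ≤ 6 * π * dist x y / ε ^ 2 := by
            rw [sub_sub_sub_cancel_right]; gcongr; exact abs_eD_sub_eD_le x y
        _ = 6 * π / ε ^ 2 * dist x y := by ring
  have hper : ∫ x in Icc (fun _ => -1) (fun _ => 1), f x = 8 * ∫ k in cell, f k := by
    have := integral_Icc_eq_pow_mul_of_periodic (g := f)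
      (fun x m => by simp only [hf, eD_add_intCast]) (-1) two_pos
      (hLip.continuous.continuousOn.integrableOn_compact isCompact_Icc)
    norm_num at this
    exact this
  have hR := abs_riemannSum_dualPt_sub_integral_le hLip hL
  rw [hper, Real.coe_toNNReal _ (by positivity)] at hR
  have hN : (2 / (2 * L + 1) : ℝ) ^ 3 = 8 * ((2 * (L : ℝ) + 1) ^ 3)⁻¹ := by
    rw [div_pow, div_eq_mul_inv]; norm_num
  rw [hN, mul_assoc, ← mul_sub, abs_mul, abs_of_pos (by norm_num : (0 : ℝ) < 8)] at hR
  change |_ * ∑ a, f (dualPt L a) - ∫ k in cell, f k| ≤ _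
  rw [mul_div_assoc, div_div] at hR
  exact le_of_mul_le_mul_left hR (by norm_num)
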